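/- Let B be the symmetric bilinear form on ℤ³ given in the standard basis e₁, e₂, e₃ by the Gram matrix with rows (−2, 1, 0), (1, −2, 1), (0, 1, −3). Then B is nondegenerate, the vector v = (1/7)(e₁ + 2e₂ + 3e₃) ∈ ℚ³ lies in the dual lattice (i.e. B_ℚ(v, eᵢ) ∈ ℤ for i = 1,2,3), B_ℚ(v, v) = −3/7, and the discriminant group disc(ℤ³, B) is cyclic of order 7, generated by the class of v. -/

import Mathlib

/-!
In the `ℚ`-basis `1 ⊗ eᵢ` of `ℚ ⊗ ℤ³` the form `B_ℚ` has Gram matrix `G = gram3`, so a vector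
with coordinates `c` is in the dual lattice exactly when `c G ∈ ℤ³`. For `v = (1, 2, 3)/7` one finds
`v G = -e₃`, which gives both `v ∈ N*` and `B_ℚ(v, v) = -3/7`; solving `c G = w` shows that every
dual vector is an integer multiple of `v` plus a lattice vector. Since `7 v ∈ ℤ³` but `v ∉ ℤ³`, the
class of `v` has prime order `7` and generates `N*/N`.
-/

open TensorProduct

noncomputable section

/-- The natural map `N → ℚ ⊗[ℤ] N`, `x ↦ 1 ⊗ x`. -/
def toQ (N : Type) [AddCommGroup N] : N →ₗ[ℤ] ℚ ⊗[ℤ] N :=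
  TensorProduct.mk ℤ ℚ N 1

/-- The dual lattice `N* = {x ∈ N ⊗ ℚ : B_ℚ(x,y) ∈ ℤ for all y ∈ N}`. -/
def dualLattice {N : Type} [AddCommGroup N]
    (B : LinearMap.BilinForm ℤ N) : Submodule ℤ (ℚ ⊗[ℤ] N) where
  carrier := {x | ∀ y : N, ∃ n : ℤ, B.baseChange ℚ x (toQ N y) = n}
  zero_mem' := fun y => ⟨0, by simp⟩
  add_mem' := by
    intro x x' hx hx' y
    obtain ⟨n, hn⟩ := hx y
    obtain ⟨n', hn'⟩ := hx' y
    exact ⟨n + n', by rw [map_add, LinearMap.add_apply, hn, hn']; push_cast; ring⟩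
  smul_mem' := by
    intro c x hx y
    obtain ⟨n, hn⟩ := hx y
    refine ⟨c * n, ?_⟩
    rw [← Int.cast_smul_eq_zsmul ℚ c x, map_smul, LinearMap.smul_apply, hn,
      smul_eq_mul]
    push_cast; ring

/-- `disc(N) = N*/N`, the discriminant group of a lattice. -/
abbrev disc {N : Type} [AddCommGroup N] (B : LinearMap.BilinForm ℤ N) :=
  (dualLattice B) ⧸ ((LinearMap.range (toQ N)).comap (dualLattice B).subtype)

/-- The saturation (primitive closure) `S̄ = {x ∈ L : n • x ∈ S for some n ≥ 1}`. -/
def saturation {L : Type} [AddCommGroup L] (S : Submodule ℤ L) :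
    Submodule ℤ L where
  carrier := {x | ∃ n : ℤ, 1 ≤ n ∧ n • x ∈ S}
  zero_mem' := ⟨1, le_refl 1, by simp⟩
  add_mem' := by
    rintro x y ⟨n, hn, hnx⟩ ⟨m, hm, hmy⟩
    refine ⟨n * m, one_le_mul_of_one_le_of_one_le hn hm, ?_⟩
    have : (n * m) • (x + y) = m • (n • x) + n • (m • y) := by
      rw [smul_add, mul_comm n m, mul_smul, mul_comm m n, mul_smul]
    rw [this]
    exact S.add_mem (S.smul_mem m hnx) (S.smul_mem n hmy)
  smul_mem' := by
    rintro c x ⟨n, hn, hnx⟩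
    refine ⟨n, hn, ?_⟩
    rw [smul_comm]
    exact S.smul_mem c hnx

/-- The orthogonal complement `S⊥ = {x ∈ L : B(x,s) = 0 for all s ∈ S}`. -/
def orthComp {L : Type} [AddCommGroup L] (B : LinearMap.BilinForm ℤ L)
    (S : Submodule ℤ L) : Submodule ℤ L where
  carrier := {x | ∀ s ∈ S, B x s = 0}
  zero_mem' := fun s _ => by simp
  add_mem' := fun hx hy s hs => by
    rw [map_add, LinearMap.add_apply, hx s hs, hy s hs, add_zero]
  smul_mem' := fun c x hx s hs => by
    rw [map_smul, LinearMap.smul_apply, hx s hs, smul_zero]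

/-- The Gram matrix of the chain of curves `A₁, A₂, E₁` (a `(-2)`-curve, a
`(-2)`-curve and a `(-3)`-curve, consecutive ones meeting once). -/
def gram3 : Matrix (Fin 3) (Fin 3) ℤ := !![-2, 1, 0; 1, -2, 1; 0, 1, -3]

/-- The bilinear form on `ℤ³` with Gram matrix `gram3`. -/
noncomputable def bform3 : LinearMap.BilinForm ℤ (Fin 3 → ℤ) :=
  Matrix.toLinearMap₂' ℤ gram3

/-- The vector `v = (1/7)(e₁ + 2e₂ + 3e₃)` in `ℚ³ = ℚ ⊗ ℤ³`. -/
noncomputable def vec3 : ℚ ⊗[ℤ] (Fin 3 → ℤ) :=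
  ((1 : ℚ) / 7) • toQ (Fin 3 → ℤ) ![1, 2, 3]


open Matrix

section CoordinateLattice

variable {ι : Type} [Fintype ι]

variable (ι) in
abbrev ratBasis : Module.Basis ι ℚ (ℚ ⊗[ℤ] (ι → ℤ)) := (Pi.basisFun ℤ ι).baseChange ℚ

lemma ratBasis_repr_toQ (y : ι → ℤ) (i : ι) : (ratBasis ι).repr (toQ (ι → ℤ) y) i = y i := by
  change ((Pi.basisFun ℤ ι).baseChange ℚ).repr ((1 : ℚ) ⊗ₜ y) i = _
  simp

lemma mem_range_toQ_iff (x : ℚ ⊗[ℤ] (ι → ℤ)) :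
    x ∈ LinearMap.range (toQ (ι → ℤ)) ↔ ∀ i, ∃ n : ℤ, (ratBasis ι).repr x i = n := by
  constructor
  · rintro ⟨y, rfl⟩ i
    exact ⟨y i, ratBasis_repr_toQ y i⟩
  · intro h
    choose y hy using h
    refine ⟨y, (ratBasis ι).repr.injective (Finsupp.ext fun i => ?_)⟩
    rw [ratBasis_repr_toQ, hy]

lemma baseChange_toLinearMap₂'_apply [DecidableEq ι] (G : Matrix ι ι ℤ) (x y : ℚ ⊗[ℤ] (ι → ℤ)) :
    LinearMap.BilinForm.baseChange ℚ (toLinearMap₂' ℤ G) x y =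
      (ratBasis ι).repr x ⬝ᵥ G.map (Int.cast : ℤ → ℚ) *ᵥ (ratBasis ι).repr y := by
  rw [LinearMap.BilinForm.apply_eq_dotProduct_toMatrix_mulVec (ratBasis ι)]
  congr 2
  ext i j
  simp [LinearMap.BilinForm.toMatrix_apply, toLinearMap₂'_apply']

lemma baseChange_toLinearMap₂'_apply_toQ [DecidableEq ι] (G : Matrix ι ι ℤ)
    (x : ℚ ⊗[ℤ] (ι → ℤ)) (y : ι → ℤ) :
    LinearMap.BilinForm.baseChange ℚ (toLinearMap₂' ℤ G) x (toQ (ι → ℤ) y) =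
      ((ratBasis ι).repr x ᵥ* G.map (Int.cast : ℤ → ℚ)) ⬝ᵥ fun j => (y j : ℚ) := by
  rw [baseChange_toLinearMap₂'_apply, dotProduct_mulVec]
  congr 1
  funext j
  exact ratBasis_repr_toQ y j

lemma mem_dualLattice_toLinearMap₂'_iff [DecidableEq ι] (G : Matrix ι ι ℤ)
    (x : ℚ ⊗[ℤ] (ι → ℤ)) :
    x ∈ dualLattice (toLinearMap₂' ℤ G) ↔
      ∀ j, ∃ n : ℤ, ((ratBasis ι).repr x ᵥ* G.map (Int.cast : ℤ → ℚ)) j = n := by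
  constructor
  · intro hx j
    obtain ⟨n, hn⟩ := hx (Pi.single j 1)
    refine ⟨n, ?_⟩
    rw [← hn, baseChange_toLinearMap₂'_apply_toQ]
    simp [dotProduct, Pi.single_apply]
  · intro h y
    choose n hn using h
    refine ⟨∑ j, n j * y j, ?_⟩
    rw [baseChange_toLinearMap₂'_apply_toQ, dotProduct]
    push_cast
    simp only [hn]

end CoordinateLattice

lemma det_gram3 : gram3.det = -7 := by decide

lemma ratBasis_repr_vec3 : ⇑((ratBasis (Fin 3)).repr vec3) = ![1/7, 2/7, 3/7] := by
  funext i
  rw [vec3, map_smul, Finsupp.smul_apply, ratBasis_repr_toQ]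
  fin_cases i <;> norm_num

lemma ratBasis_repr_vec3_vecMul_gram3 :
    (ratBasis (Fin 3)).repr vec3 ᵥ* gram3.map (Int.cast : ℤ → ℚ) = ![0, 0, -1] := by
  rw [ratBasis_repr_vec3]
  ext j
  fin_cases j <;> simp [vecMul, dotProduct, Fin.sum_univ_three, gram3] <;> norm_num

lemma vec3_mem_dualLattice : vec3 ∈ dualLattice bform3 := by
  rw [bform3, mem_dualLattice_toLinearMap₂'_iff, ratBasis_repr_vec3_vecMul_gram3]
  intro j
  fin_cases j
  exacts [⟨0, rfl⟩, ⟨0, rfl⟩, ⟨-1, by simp⟩]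

lemma baseChange_bform3_vec3_vec3 : bform3.baseChange ℚ vec3 vec3 = -3 / 7 := by
  rw [bform3, baseChange_toLinearMap₂'_apply, dotProduct_mulVec,
    ratBasis_repr_vec3_vecMul_gram3, ratBasis_repr_vec3]
  norm_num [dotProduct, Fin.sum_univ_three, cons_val_two]

lemma nsmul_seven_vec3 : 7 • vec3 = toQ (Fin 3 → ℤ) ![1, 2, 3] := by
  rw [vec3, ← Nat.cast_smul_eq_nsmul ℚ, smul_smul]
  norm_num

lemma vec3_notMem_range_toQ : vec3 ∉ LinearMap.range (toQ (Fin 3 → ℤ)) := by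
  intro h
  obtain ⟨n, hn⟩ := (mem_range_toQ_iff vec3).1 h 0
  rw [ratBasis_repr_vec3] at hn
  have : ((7 * n : ℤ) : ℚ) = 1 := by push_cast; rw [← hn]; norm_num
  have : 7 * n = 1 := by exact_mod_cast this
  omega

lemma exists_sub_zsmul_vec3_mem_range_toQ {x : ℚ ⊗[ℤ] (Fin 3 → ℤ)}
    (hx : x ∈ dualLattice bform3) :
    ∃ k : ℤ, x - k • vec3 ∈ LinearMap.range (toQ (Fin 3 → ℤ)) := by
  rw [bform3, mem_dualLattice_toLinearMap₂'_iff] at hx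
  set c := ⇑((ratBasis (Fin 3)).repr x)
  obtain ⟨w₀, hw₀⟩ := hx 0
  obtain ⟨w₁, hw₁⟩ := hx 1
  obtain ⟨w₂, hw₂⟩ := hx 2
  simp only [vecMul, dotProduct, Fin.sum_univ_three, gram3, map_apply, of_apply, cons_val,
    Int.cast_neg, Int.cast_ofNat, Int.cast_one, Int.cast_zero] at hw₀ hw₁ hw₂
  -- Solving `c * gram3 = w` for `c` gives `c = k • (1, 2, 3)/7 + (0, w₀, 2 w₀ + w₁)`.
  refine ⟨-(5 * w₀ + 3 * w₁ + w₂), (mem_range_toQ_iff _).2 fun i => ?_⟩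
  rw [map_sub, map_zsmul, Finsupp.sub_apply, Finsupp.smul_apply, ratBasis_repr_vec3]
  fin_cases i <;> simp only [Fin.zero_eta, Fin.mk_one, Fin.reduceFinMk, cons_val, zsmul_eq_mul,
    Int.cast_add, Int.cast_neg, Int.cast_mul, Int.cast_ofNat]
  exacts [⟨0, by push_cast; linarith⟩, ⟨w₀, by linarith⟩, ⟨2 * w₀ + w₁, by push_cast; linarith⟩]

def vec3Class : disc bform3 := Submodule.Quotient.mk ⟨vec3, vec3_mem_dualLattice⟩

lemma mem_zmultiples_vec3Class (u : disc bform3) : u ∈ AddSubgroup.zmultiples vec3Class := by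
  obtain ⟨⟨x, hx⟩, rfl⟩ := Submodule.Quotient.mk_surjective _ u
  obtain ⟨k, y, hy⟩ := exists_sub_zsmul_vec3_mem_range_toQ hx
  refine ⟨k, ?_⟩
  change k • vec3Class = _
  rw [vec3Class, ← Submodule.Quotient.mk_smul, eq_comm, Submodule.Quotient.eq]
  exact ⟨y, hy⟩

lemma addOrderOf_vec3Class : addOrderOf vec3Class = 7 := by
  have : Fact (Nat.Prime 7) := ⟨by norm_num⟩
  refine addOrderOf_eq_prime ?_ ?_
  · rw [vec3Class, ← Submodule.Quotient.mk_smul, Submodule.Quotient.mk_eq_zero]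
    exact ⟨![1, 2, 3], nsmul_seven_vec3.symm⟩
  · rw [vec3Class, Ne, Submodule.Quotient.mk_eq_zero]
    exact vec3_notMem_range_toQ

theorem fake_plane_stmt10 :
    (∀ x : Fin 3 → ℤ, (∀ y : Fin 3 → ℤ, bform3 x y = 0) → x = 0) ∧
    ∃ hv : vec3 ∈ dualLattice bform3,
      bform3.baseChange ℚ vec3 vec3 = -3 / 7 ∧
      Nat.card (disc bform3) = 7 ∧
      ∀ u : disc bform3, ∃ n : ℤ,
        u = n • (Submodule.Quotient.mk (⟨vec3, hv⟩ : dualLattice bform3)) := by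
  refine ⟨?_, vec3_mem_dualLattice, baseChange_bform3_vec3_vec3, ?_, fun u => ?_⟩
  · exact (nondegenerate_of_det_ne_zero (by simp [det_gram3])).separatingLeft.toLinearMap₂'
  · rw [← addOrderOf_eq_card_of_forall_mem_zmultiples mem_zmultiples_vec3Class,
      addOrderOf_vec3Class]
  · obtain ⟨n, hn⟩ := mem_zmultiples_vec3Class u
    exact ⟨n, hn.symm⟩
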